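/- (Entropy-typical projector) Let ρ₁,…,ρₙ be density operators on ℂ^d with diagonalizations ρᵢ = ∑_j q_{j|i} π_{ij} into rank-one orthogonal eigenprojections, let δ > 0, let T = { (j₁,…,jₙ) : |∑_{i=1}^n (−log₂ q_{jᵢ|i}) − ∑_{i=1}^n H(ρᵢ)| ≤ δ√n } and Π = ∑_{(j₁,…,jₙ)∈T} π_{1j₁} ⊗ ⋯ ⊗ π_{njₙ}. Then with K = max{(log₂3)², (log₂d)²}: Tr((ρ₁⊗⋯⊗ρₙ)Π) ≥ 1 − K/δ². -/

import Mathlib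

/-!
Because the eigenprojections of each `ρᵢ` are orthogonal of trace one, `Tr((ρ₁ ⊗ ⋯ ⊗ ρₙ) Π)` is
the probability of `T` under the product distribution `∏ᵢ q_{jᵢ|i}`. Under it the surprisals
`-log₂ q_{jᵢ|i}` are independent with means `H(ρᵢ)`, so by Chebyshev the complement of `T` has
probability at most `∑ᵢ Var(-log₂ q_{·|i}) / (δ² n)`. The variance of the surprisal of a
distribution on `d` points is at most `K`: bound it by the second moment about `(ln m) / 2` for
`m = 1`, `3` or `d`, and use `u^k e^{-u} ≤ (k/e)^k` to control each term `x ln x (ln x + ln m)`.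
-/

open scoped ComplexOrder Matrix

namespace QIT

def IsDensity {d : ℕ} (ρ : Matrix (Fin d) (Fin d) ℂ) : Prop :=
  ρ.PosSemidef ∧ ρ.trace = 1

def IsPure {d : ℕ} (ρ : Matrix (Fin d) (Fin d) ℂ) : Prop :=
  ρ.IsHermitian ∧ ρ * ρ = ρ ∧ ρ.rank = 1

/-- `n`-fold tensor (Kronecker) product of matrices, on the index set
`Fin n → Fin d`. -/
noncomputable def tprod {d n : ℕ} (ρ : Fin n → Matrix (Fin d) (Fin d) ℂ) :
    Matrix (Fin n → Fin d) (Fin n → Fin d) ℂ :=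
  fun j k => ∏ i, ρ i (j i) (k i)

def occ {n : ℕ} {X : Type*} [DecidableEq X] (x : X) (xn : Fin n → X) : ℕ :=
  (Finset.univ.filter fun i => xn i = x).card

section RealInequalities

open Real Finset

theorem sq_mul_exp_neg_le {u : ℝ} (hu : 0 ≤ u) : u ^ 2 * exp (-u) ≤ 4 * exp (-2) := by
  have h := mul_exp_neg_le_exp_neg_one (u / 2)
  have h0 : 0 ≤ u / 2 * exp (-(u / 2)) := by positivity
  calc u ^ 2 * exp (-u) = 4 * (u / 2 * exp (-(u / 2))) ^ 2 := by
        rw [mul_pow, ← exp_nat_mul]; ring_nf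
    _ ≤ 4 * exp (-1) ^ 2 := by gcongr
    _ = 4 * exp (-2) := by rw [← exp_nat_mul]; norm_num

theorem mul_sub_mul_exp_neg_le {a u : ℝ} (ha : 0 ≤ a) (hu : 0 ≤ u) :
    u * (u - a) * exp (-u) ≤ (4 * exp (-2) + a * exp (-1)) * exp (-a) := by
  rcases le_total u a with hua | hau
  · have : u * (u - a) ≤ 0 := mul_nonpos_of_nonneg_of_nonpos hu (by linarith)
    have : 0 ≤ (4 * exp (-2) + a * exp (-1)) * exp (-a) := by positivity
    nlinarith [exp_pos (-u)]
  · set v := u - a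
    have hv : 0 ≤ v := by linarith
    have hsq := sq_mul_exp_neg_le hv
    have hlin := mul_exp_neg_le_exp_neg_one v
    calc u * (u - a) * exp (-u) = (v ^ 2 * exp (-v) + a * (v * exp (-v))) * exp (-a) := by
          rw [show u = v + a by ring, show -(v + a) = -v + -a by ring, exp_add]; ring
      _ ≤ (4 * exp (-2) + a * exp (-1)) * exp (-a) := by gcongr

-- `u (u - ln 3) e^{-u}` peaks within 4% of `(ln 3)² / 4`, so a degree-6 Taylor bound is needed.
theorem mul_sub_log_three_le {u : ℝ} (hu : 0 ≤ u) :
    u * (u - log 3) ≤ (log 3) ^ 2 / 4 * exp u := by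
  have hlog3 : (1.0986 : ℝ) ≤ log 3 := by linarith [log_three_gt_d9]
  have hexp : ∑ i ∈ range 7, u ^ i / i.factorial ≤ exp u := sum_le_exp_of_nonneg hu 7
  simp only [sum_range_succ, sum_range_zero, Nat.factorial] at hexp
  norm_num at hexp
  calc u * (u - log 3) ≤ u ^ 2 - 1.0986 * u := by nlinarith
    _ ≤ 1.0986 ^ 2 / 4 * (1 + u + u^2/2 + u^3/6 + u^4/24 + u^5/120 + u^6/720) := by
      nlinarith [sq_nonneg (u - 2.77), sq_nonneg (u^2 - 2.77*u), sq_nonneg (u^3 - 2.77*u^2),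
        sq_nonneg u, sq_nonneg (u^2-7.6729), mul_nonneg hu hu]
    _ ≤ 1.0986 ^ 2 / 4 * exp u := by gcongr
    _ ≤ (log 3) ^ 2 / 4 * exp u := by gcongr

theorem mul_log_mul_log_add_log_le {m x : ℝ} (hm : 1 ≤ m) (hx0 : 0 ≤ x) (hx1 : x ≤ 1) :
    x * log x * (log x + log m) ≤ (4 * exp (-2) + log m * exp (-1)) / m := by
  rcases hx0.eq_or_lt with rfl | hx
  · simp only [zero_mul]; have := log_nonneg hm; positivity
  calc x * log x * (log x + log m) = -log x * (-log x - log m) * exp (-(-log x)) := by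
        rw [neg_neg, exp_log hx]; ring
    _ ≤ (4 * exp (-2) + log m * exp (-1)) * exp (-log m) :=
        mul_sub_mul_exp_neg_le (log_nonneg hm) (neg_nonneg.2 (log_nonpos hx0 hx1))
    _ = (4 * exp (-2) + log m * exp (-1)) / m := by
        rw [exp_neg (log m), exp_log (by linarith), div_eq_mul_inv]

theorem mul_log_mul_log_add_log_three_le {x : ℝ} (hx0 : 0 ≤ x) (hx1 : x ≤ 1) :
    x * log x * (log x + log 3) ≤ (log 3) ^ 2 / 4 := by
  rcases hx0.eq_or_lt with rfl | hx
  · simp only [zero_mul]; positivity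
  calc x * log x * (log x + log 3) = -log x * (-log x - log 3) * exp (-(-log x)) := by
        rw [neg_neg, exp_log hx]; ring
    _ ≤ (log 3) ^ 2 / 4 * exp (-log x) * exp (-(-log x)) := by
        gcongr ?_ * _
        exact mul_sub_log_three_le (neg_nonneg.2 (log_nonpos hx0 hx1))
    _ = (log 3) ^ 2 / 4 := by rw [mul_assoc, ← exp_add]; simp

end RealInequalities

section WeightedVariance

open Real Finset

variable {α : Type*} [Fintype α] {q : α → ℝ}

theorem sum_mul_sub_sq_eq (hq : ∑ j, q j = 1) (X : α → ℝ) (c : ℝ) :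
    ∑ j, q j * (X j - c) ^ 2 =
      ∑ j, q j * (X j - ∑ k, q k * X k) ^ 2 + (∑ k, q k * X k - c) ^ 2 := by
  have expand : ∀ c : ℝ, ∑ j, q j * (X j - c) ^ 2 =
      ∑ j, q j * X j ^ 2 - 2 * c * ∑ j, q j * X j + c ^ 2 := fun c => by
    simp only [fun j => show q j * (X j - c) ^ 2 = q j * X j ^ 2 - 2 * c * (q j * X j) + c ^ 2 * q j
      by ring, sum_add_distrib, sum_sub_distrib, ← mul_sum, hq, mul_one]
  rw [expand, expand]; ring

theorem sum_mul_sub_mean_sq_le (hq : ∑ j, q j = 1) (X : α → ℝ) (c : ℝ) :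
    ∑ j, q j * (X j - ∑ k, q k * X k) ^ 2 ≤ ∑ j, q j * (X j - c) ^ 2 := by
  rw [sum_mul_sub_sq_eq hq X c]; exact le_add_of_nonneg_right (sq_nonneg _)

theorem sum_mul_neg_log_sub_half_sq_eq (hq : ∑ j, q j = 1) (a : ℝ) :
    ∑ j, q j * (-log (q j) - a / 2) ^ 2 = a ^ 2 / 4 + ∑ j, q j * log (q j) * (log (q j) + a) := by
  simp only [fun j => show q j * (-log (q j) - a / 2) ^ 2 =
      a ^ 2 / 4 * q j + q j * log (q j) * (log (q j) + a) by ring, sum_add_distrib, ← mul_sum,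
    hq, mul_one]

theorem sum_mul_neg_log_sub_half_log_sq_le (hq0 : ∀ j, 0 ≤ q j) (hq : ∑ j, q j = 1) {m : ℝ}
    (hm : 1 ≤ m) :
    ∑ j, q j * (-log (q j) - log m / 2) ^ 2 ≤
      (log m) ^ 2 / 4 + Fintype.card α * ((4 * exp (-2) + log m * exp (-1)) / m) := by
  have hq1 : ∀ j, q j ≤ 1 := fun j => hq ▸ single_le_sum (fun k _ => hq0 k) (mem_univ j)
  rw [sum_mul_neg_log_sub_half_sq_eq hq]
  gcongr
  simpa using sum_le_sum fun j (_ : j ∈ univ) => mul_log_mul_log_add_log_le hm (hq0 j) (hq1 j)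

theorem sum_mul_neg_log_sub_half_log_three_sq_le (hq0 : ∀ j, 0 ≤ q j) (hq : ∑ j, q j = 1) :
    ∑ j, q j * (-log (q j) - log 3 / 2) ^ 2 ≤
      (log 3) ^ 2 / 4 + Fintype.card α * ((log 3) ^ 2 / 4) := by
  have hq1 : ∀ j, q j ≤ 1 := fun j => hq ▸ single_le_sum (fun k _ => hq0 k) (mem_univ j)
  rw [sum_mul_neg_log_sub_half_sq_eq hq]
  gcongr
  simpa using sum_le_sum fun j (_ : j ∈ univ) => mul_log_mul_log_add_log_three_le (hq0 j) (hq1 j)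

theorem sum_mul_neg_log_sub_entropy_sq_le (hq0 : ∀ j, 0 ≤ q j) (hq : ∑ j, q j = 1) :
    ∑ j, q j * (-log (q j) - -∑ k, q k * log (q k)) ^ 2 ≤
      max ((log 3) ^ 2) ((log (Fintype.card α)) ^ 2) := by
  have hmean : -∑ k, q k * log (q k) = ∑ k, q k * -log (q k) := by
    simp only [mul_neg, sum_neg_distrib]
  rw [hmean]
  have hvar := sum_mul_sub_mean_sq_le hq fun j => -log (q j)
  have he1 : exp (-1) < 0.3679 := by
    rw [exp_neg, inv_lt_comm₀ (exp_pos 1) (by norm_num)]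
    linarith [exp_one_gt_d9]
  have he2 : exp (-2) < 0.1354 := by
    rw [show (-2 : ℝ) = -1 + -1 by norm_num, exp_add]
    nlinarith [exp_pos (-1)]
  have hlog3 := log_three_gt_d9
  set d := Fintype.card α
  rcases le_or_gt d 2 with hd | hd
  · calc _ ≤ ∑ j, q j * (-log (q j) - log 1 / 2) ^ 2 := hvar _
      _ ≤ (log 1) ^ 2 / 4 + d * ((4 * exp (-2) + log 1 * exp (-1)) / 1) :=
        sum_mul_neg_log_sub_half_log_sq_le hq0 hq le_rfl
      _ ≤ (log 3) ^ 2 := by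
        have : (d : ℝ) ≤ 2 := by exact_mod_cast hd
        simp only [log_one]; nlinarith [exp_pos (-2)]
      _ ≤ _ := le_max_left _ _
  -- For `d = 3` the generic bound `(ln 3)² / 4 + 4 e⁻² + e⁻¹ ln 3` exceeds `(ln 3)²`.
  rcases eq_or_lt_of_le (Nat.succ_le_of_lt hd) with hd | hd
  · calc _ ≤ ∑ j, q j * (-log (q j) - log 3 / 2) ^ 2 := hvar _
      _ ≤ (log 3) ^ 2 / 4 + d * ((log 3) ^ 2 / 4) :=
        sum_mul_neg_log_sub_half_log_three_sq_le hq0 hq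
      _ = (log 3) ^ 2 := by rw [← hd]; norm_num; ring
      _ ≤ _ := le_max_left _ _
  · have hd4 : (4 : ℝ) ≤ d := by exact_mod_cast hd
    have hlogd : 1.386 ≤ log d := by
      have := log_le_log (by norm_num) hd4
      rw [show (4 : ℝ) = 2 ^ 2 by norm_num, log_pow, Nat.cast_ofNat] at this
      linarith [log_two_gt_d9]
    calc _ ≤ ∑ j, q j * (-log (q j) - log d / 2) ^ 2 := hvar _
      _ ≤ (log d) ^ 2 / 4 + d * ((4 * exp (-2) + log d * exp (-1)) / d) :=
        sum_mul_neg_log_sub_half_log_sq_le hq0 hq (by linarith)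
      _ = (log d) ^ 2 / 4 + 4 * exp (-2) + log d * exp (-1) := by field_simp; ring
      _ ≤ (log d) ^ 2 := by nlinarith
      _ ≤ _ := le_max_right _ _

theorem sum_mul_neg_logb_sub_entropy_sq_le (hq0 : ∀ j, 0 ≤ q j) (hq : ∑ j, q j = 1) :
    ∑ j, q j * (-logb 2 (q j) - -∑ k, q k * logb 2 (q k)) ^ 2 ≤
      max ((logb 2 3) ^ 2) ((logb 2 (Fintype.card α)) ^ 2) := by
  have hscale : ∀ j, q j * (-logb 2 (q j) - -∑ k, q k * logb 2 (q k)) ^ 2 =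
      q j * (-log (q j) - -∑ k, q k * log (q k)) ^ 2 / (log 2) ^ 2 := fun j => by
    simp only [logb, mul_div_assoc', ← sum_div]; ring
  rw [sum_congr rfl fun j _ => hscale j, ← sum_div, logb, logb, div_pow, div_pow,
    max_div_div_right (sq_nonneg _)]
  exact div_le_div_of_nonneg_right (sum_mul_neg_log_sub_entropy_sq_le hq0 hq) (sq_nonneg _)

end WeightedVariance

section ProductWeights

open Finset

variable {ι α : Type*} [Fintype ι] [DecidableEq ι] [Fintype α] (q : ι → α → ℝ)

theorem sum_prod_mul_ite_mul_ite (i i' : ι) (f g : α → ℝ) :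
    ∑ x : ι → α, (∏ k, q k (x k)) * (f (x i) * g (x i')) =
      ∏ k, ∑ j, q k j * ((if k = i then f j else 1) * (if k = i' then g j else 1)) := by
  rw [Fintype.prod_sum]
  refine sum_congr rfl fun x _ => ?_
  simp only [prod_mul_distrib, prod_ite_eq', mem_univ, if_true]

variable {q}

theorem sum_prod_mul_apply_mul_apply_of_ne (hq : ∀ k, ∑ j, q k j = 1) {i i' : ι} (h : i ≠ i')
    (f g : α → ℝ) :
    ∑ x : ι → α, (∏ k, q k (x k)) * (f (x i) * g (x i')) =
      (∑ j, q i j * f j) * ∑ j, q i' j * g j := by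
  rw [sum_prod_mul_ite_mul_ite, Fintype.prod_eq_mul i i' h]
  · simp [h, Ne.symm h]
  · rintro k ⟨hki, hki'⟩
    simp [hki, hki', hq]

theorem sum_prod_mul_apply (hq : ∀ k, ∑ j, q k j = 1) (i : ι) (f : α → ℝ) :
    ∑ x : ι → α, (∏ k, q k (x k)) * f (x i) = ∑ j, q i j * f j := by
  have h := sum_prod_mul_ite_mul_ite q i i f 1
  simp only [Pi.one_apply, mul_one, ite_self] at h
  rw [h, Fintype.prod_eq_single i fun k hk => by simp [hk, hq]]
  simp

theorem sum_prod_mul_sum_sq (hq : ∀ k, ∑ j, q k j = 1) (Y : ι → α → ℝ)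
    (hY : ∀ i, ∑ j, q i j * Y i j = 0) :
    ∑ x : ι → α, (∏ k, q k (x k)) * (∑ i, Y i (x i)) ^ 2 = ∑ i, ∑ j, q i j * Y i j ^ 2 := by
  calc ∑ x : ι → α, (∏ k, q k (x k)) * (∑ i, Y i (x i)) ^ 2
      = ∑ i, ∑ i', ∑ x : ι → α, (∏ k, q k (x k)) * (Y i (x i) * Y i' (x i')) := by
        simp_rw [sq, sum_mul_sum, mul_sum]
        rw [sum_comm]
        exact sum_congr rfl fun i _ => sum_comm
    _ = ∑ i, ∑ j, q i j * Y i j ^ 2 := by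
        refine sum_congr rfl fun i _ => ?_
        rw [sum_eq_single i (fun i' _ h => by
          rw [sum_prod_mul_apply_mul_apply_of_ne hq (Ne.symm h), hY, zero_mul]) (by simp)]
        simpa only [sq] using sum_prod_mul_apply hq i fun j => Y i j * Y i j

theorem sum_filter_lt_abs_le_div_sq {β : Type*} [Fintype β] {w : β → ℝ} (hw : ∀ x, 0 ≤ w x)
    (f : β → ℝ) {c : ℝ} (hc : 0 < c) :
    ∑ x with c < |f x|, w x ≤ (∑ x, w x * f x ^ 2) / c ^ 2 := by
  rw [le_div_iff₀ (by positivity), sum_mul]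
  calc ∑ x with c < |f x|, w x * c ^ 2 ≤ ∑ x with c < |f x|, w x * f x ^ 2 :=
        sum_le_sum fun x hx => mul_le_mul_of_nonneg_left (by
          rw [← sq_abs (f x)]; exact pow_le_pow_left₀ hc.le (mem_filter.1 hx).2.le 2) (hw x)
    _ ≤ ∑ x, w x * f x ^ 2 :=
        sum_le_sum_of_subset_of_nonneg (filter_subset _ _) fun x _ _ => by
          have := hw x; positivity

theorem one_sub_div_sq_le_sum_prod_filter_abs_sub_le (hq0 : ∀ i j, 0 ≤ q i j)
    (hq1 : ∀ i, ∑ j, q i j = 1) (X : ι → α → ℝ) (μ : ι → ℝ)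
    (hμ : ∀ i, ∑ j, q i j * X i j = μ i) {K δ : ℝ}
    (hvar : ∀ i, ∑ j, q i j * (X i j - μ i) ^ 2 ≤ K) (hK : 0 ≤ K) (hδ : 0 < δ) :
    1 - K / δ ^ 2 ≤ ∑ x : ι → α with
      |∑ i, X i (x i) - ∑ i, μ i| ≤ δ * √(Fintype.card ι), ∏ i, q i (x i) := by
  set n := Fintype.card ι
  have hw : ∀ x : ι → α, 0 ≤ ∏ i, q i (x i) := fun x => prod_nonneg fun i _ => hq0 i (x i)
  have htotal : ∑ x : ι → α, ∏ i, q i (x i) = 1 := by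
    rw [← Fintype.prod_sum]; exact Fintype.prod_eq_one _ hq1
  rw [← sum_filter_add_sum_filter_not univ
    (fun x : ι → α => |∑ i, X i (x i) - ∑ i, μ i| ≤ δ * √n)] at htotal
  suffices hbad : ∑ x : ι → α with ¬|∑ i, X i (x i) - ∑ i, μ i| ≤ δ * √n, ∏ i, q i (x i)
      ≤ K / δ ^ 2 by linarith
  rcases (Nat.eq_zero_or_pos n) with hn | hn
  · have : IsEmpty ι := Fintype.card_eq_zero_iff.1 hn
    simp only [univ_eq_empty, sum_empty, sub_self, abs_zero, hn, CharP.cast_eq_zero, Real.sqrt_zero,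
      mul_zero, le_refl, not_true_eq_false, filter_false]
    positivity
  have hY : ∀ i, ∑ j, q i j * (X i j - μ i) = 0 := fun i => by
    simp only [mul_sub, sum_sub_distrib, hμ, ← sum_mul, hq1, one_mul, sub_self]
  have hn' : (0 : ℝ) < n := by exact_mod_cast hn
  simp only [not_le, ← sum_sub_distrib]
  calc _ ≤ (∑ x : ι → α, (∏ i, q i (x i)) * (∑ i, (X i (x i) - μ i)) ^ 2) / (δ * √n) ^ 2 :=
        sum_filter_lt_abs_le_div_sq hw _ (by positivity)
    _ = (∑ i, ∑ j, q i j * (X i j - μ i) ^ 2) / (δ ^ 2 * n) := by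
        rw [sum_prod_mul_sum_sq hq1 (fun i j => X i j - μ i) hY, mul_pow,
          Real.sq_sqrt hn'.le]
    _ ≤ (n * K) / (δ ^ 2 * n) := by
        gcongr
        simpa using sum_le_sum fun i (_ : i ∈ univ) => hvar i
    _ = K / δ ^ 2 := by field_simp

end ProductWeights

theorem _root_.Matrix.trace_eq_rank_of_isIdempotentElem {K m : Type*} [Field K] [Fintype m]
    [DecidableEq m] {P : Matrix m m K} (h : IsIdempotentElem P) : P.trace = P.rank := by
  have he : IsIdempotentElem P.mulVecLin := by
    rw [IsIdempotentElem, Module.End.mul_eq_comp, ← Matrix.mulVecLin_mul, h.eq]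
  rw [Matrix.rank, ← ((LinearMap.isProj_range_iff_isIdempotentElem _).2 he).trace,
    ← Matrix.toLin'_apply', LinearMap.trace_eq_matrix_trace K (Pi.basisFun K m),
    LinearMap.toMatrix_eq_toMatrix', LinearMap.toMatrix'_toLin']

theorem IsPure.trace_eq_one {d : ℕ} {P : Matrix (Fin d) (Fin d) ℂ} (h : IsPure P) :
    P.trace = 1 := by
  rw [Matrix.trace_eq_rank_of_isIdempotentElem h.2.1, h.2.2, Nat.cast_one]

theorem trace_sum_smul_mul_of_mul_eq_zero {R m α : Type*} [CommSemiring R] [Fintype m]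
    [Fintype α] (c : α → R) {P : α → Matrix m m R} (hidem : ∀ j, P j * P j = P j)
    (horth : ∀ j k, j ≠ k → P j * P k = 0) (j : α) :
    ((∑ k, c k • P k) * P j).trace = c j * (P j).trace := by
  rw [Finset.sum_mul, Finset.sum_eq_single j
    (fun k _ hk => by rw [smul_mul_assoc, horth k j hk, smul_zero]) (by simp),
    smul_mul_assoc, hidem, Matrix.trace_smul, smul_eq_mul]

theorem trace_tprod_mul {d n : ℕ} (A B : Fin n → Matrix (Fin d) (Fin d) ℂ) :
    (tprod A * tprod B).trace = ∏ i, (A i * B i).trace := by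
  simp only [Matrix.trace, Matrix.diag, Matrix.mul_apply, tprod, ← Finset.prod_mul_distrib]
  rw [Fintype.prod_sum]
  refine Finset.sum_congr rfl fun x _ => ?_
  rw [Fintype.prod_sum]

theorem entropy_typical_projector_general {d n : ℕ}
    (ρ : Fin n → Matrix (Fin d) (Fin d) ℂ) (hρ : ∀ i, IsDensity (ρ i))
    (q : Fin n → Fin d → ℝ) (π : Fin n → Fin d → Matrix (Fin d) (Fin d) ℂ)
    (hq0 : ∀ i j, 0 ≤ q i j) (hπ : ∀ i j, IsPure (π i j))
    (horth : ∀ i j k, j ≠ k → π i j * π i k = 0)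
    (hdiag : ∀ i, ρ i = ∑ j, (q i j : ℂ) • π i j)
    (δ : ℝ) (hδ : 0 < δ) :
    let H : Fin n → ℝ := fun i => -∑ j, q i j * Real.logb 2 (q i j)
    let T : Finset (Fin n → Fin d) := Finset.univ.filter fun jn =>
      |(∑ i, -Real.logb 2 (q i (jn i))) - ∑ i, H i| ≤ δ * Real.sqrt n
    let Pi : Matrix (Fin n → Fin d) (Fin n → Fin d) ℂ :=
      ∑ jn ∈ T, tprod fun i => π i (jn i)
    let K : ℝ := max ((Real.logb 2 3) ^ 2) ((Real.logb 2 d) ^ 2)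
    1 - K / δ ^ 2 ≤ ((tprod ρ * Pi).trace).re := by
  intro H T Pi K
  have hsite : ∀ i j, (ρ i * π i j).trace = q i j := fun i j => by
    rw [hdiag i, trace_sum_smul_mul_of_mul_eq_zero _ (fun j => (hπ i j).2.1) (horth i),
      (hπ i j).trace_eq_one, mul_one]
  have hq1 : ∀ i, ∑ j, q i j = 1 := fun i => by
    have h := (hρ i).2
    simp only [hdiag i, Matrix.trace_sum, Matrix.trace_smul, (hπ _ _).trace_eq_one, smul_eq_mul,
      mul_one] at h
    exact_mod_cast h
  have htrace : (tprod ρ * Pi).trace = ((∑ jn ∈ T, ∏ i, q i (jn i) : ℝ) : ℂ) := by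
    simp only [Pi, Matrix.mul_sum, Matrix.trace_sum, trace_tprod_mul, hsite]
    push_cast; rfl
  have hmean : ∀ i, ∑ j, q i j * -Real.logb 2 (q i j) = H i := fun i => by
    simp only [H, mul_neg, Finset.sum_neg_distrib]
  have hvar := fun i => sum_mul_neg_logb_sub_entropy_sq_le (hq0 i) (hq1 i)
  rw [Fintype.card_fin] at hvar
  rw [htrace, Complex.ofReal_re]
  simpa only [Fintype.card_fin] using one_sub_div_sq_le_sum_prod_filter_abs_sub_le hq0 hq1
    (fun i j => -Real.logb 2 (q i j)) H hmean hvar (by positivity) hδ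

/-- The entropy-typical projector of `ρ₁ ⊗ ⋯ ⊗ ρₙ` with constant `δ` catches
probability at least `1 − K/δ²`, with `K = max{(log₂3)², (log₂d)²}`.  Here
`ρᵢ = ∑ⱼ q_{j|i} π_{ij}` are diagonalizations into rank-one orthogonal
eigenprojections. -/
theorem entropy_typical_projector {d n : ℕ}
    (ρ : Fin n → Matrix (Fin d) (Fin d) ℂ) (hρ : ∀ i, IsDensity (ρ i))
    (q : Fin n → Fin d → ℝ) (π : Fin n → Fin d → Matrix (Fin d) (Fin d) ℂ)
    (hq0 : ∀ i j, 0 ≤ q i j) (hπ : ∀ i j, IsPure (π i j))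
    (horth : ∀ i j k, j ≠ k → π i j * π i k = 0) (hπsum : ∀ i, ∑ j, π i j = 1)
    (hdiag : ∀ i, ρ i = ∑ j, (q i j : ℂ) • π i j)
    (δ : ℝ) (hδ : 0 < δ) :
    let H : Fin n → ℝ := fun i => -∑ j, q i j * Real.logb 2 (q i j)
    let T : Finset (Fin n → Fin d) := Finset.univ.filter fun jn =>
      |(∑ i, -Real.logb 2 (q i (jn i))) - ∑ i, H i| ≤ δ * Real.sqrt n
    let Pi : Matrix (Fin n → Fin d) (Fin n → Fin d) ℂ :=
      ∑ jn ∈ T, tprod fun i => π i (jn i)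
    let K : ℝ := max ((Real.logb 2 3) ^ 2) ((Real.logb 2 d) ^ 2)
    1 - K / δ ^ 2 ≤ ((tprod ρ * Pi).trace).re :=
  entropy_typical_projector_general ρ hρ q π hq0 hπ horth hdiag δ hδ

end QIT
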